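/- arXiv:1506.00826 — 4 statements merged into one kernel-verified Lean document; each statement's English description precedes it below -/
import Mathlib

section
/- Let f ∈ ℤ[q, q^{−1}] be nonzero. Suppose that for every field K and every z ∈ K^× that is not a root of unity, the image of f under the ring homomorphism ℤ[q, q^{−1}] → K sending q to z is nonzero. Then f is, up to sign, a product q^a · f_1^{ε_1} ⋯ f_N^{ε_N} where a ∈ ℤ, each f_j ∈ ℤ[q] is a cyclotomic polynomial, and ε_j ∈ {±1}; equivalently, f is a unit in the ring ℤ[q, q^{−1}, (q^n − 1)^{−1} : n > 0]. -/
noncomputable section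

/-- Evaluation of a Laurent polynomial over `ℤ` at a unit `z` of a field `K`. -/
def lEval {K : Type*} [Field K] (z : Kˣ) (f : LaurentPolynomial ℤ) : K :=
  f.coeff.sum fun n a => (a : K) * ((z ^ n : Kˣ) : K)

/-- The canonical image of a Laurent polynomial over `ℤ` in `ℚ(q)` (with `q = X`). -/
def lRF (f : LaurentPolynomial ℤ) : RatFunc ℚ :=
  f.coeff.sum fun n a => (a : RatFunc ℚ) * (RatFunc.X : RatFunc ℚ) ^ n

/-- The subring `Ã = ℤ[q, q⁻¹, (qⁿ−1)⁻¹ : n > 0]` of `ℚ(q)`. -/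
def Atilde : Subring (RatFunc ℚ) :=
  Subring.closure
    ({RatFunc.X, (RatFunc.X)⁻¹} ∪
      {x : RatFunc ℚ | ∃ n : ℕ, 0 < n ∧ x = ((RatFunc.X : RatFunc ℚ) ^ n - 1)⁻¹})


/-!
Write `f = g · q⁻ⁿ` with `g ∈ ℤ[q]`. Specializing `q` to a complex number that is not a root of
unity shows that every nonzero complex root of `g` is a root of unity; since `Φₘ` is the minimal
polynomial over `ℤ` of a primitive `m`-th root of unity and is monic, dividing these factors off
gives `g = c · qᵏ · ∏ Φₘⱼ` in `ℤ[q]`. Specializing `q` to the transcendental element `X` of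
`𝔽ₚ(X)` shows that no prime divides `c`, so `c = ±1`. Finally `Φₘ(q)` divides `qᵐ - 1`, so its
inverse lies in `Ã`.
-/

open Polynomial

theorem Polynomial.aeval_int_eq_eval₂ {A : Type*} [Ring A] [Algebra ℤ A] (x : A) (p : ℤ[X]) :
    aeval x p = eval₂ (Int.castRingHom A) x p := by
  rw [aeval_def, RingHom.ext_int (algebraMap ℤ A) (Int.castRingHom A)]

theorem lEval_eq_eval₂ {K : Type*} [Field K] (z : Kˣ) (f : LaurentPolynomial ℤ) :
    lEval z f = LaurentPolynomial.eval₂ (Int.castRingHom K) z f := by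
  induction f using LaurentPolynomial.induction_on' with
  | add p q hp hq =>
    rw [map_add, ← hp, ← hq]
    exact Finsupp.sum_add_index' (fun _ => by simp) fun _ _ _ => by push_cast; ring
  | C_mul_T n a =>
    rw [map_mul, LaurentPolynomial.eval₂_C, LaurentPolynomial.eval₂_T, lEval,
      ← LaurentPolynomial.single_eq_C_mul_T]
    exact Finsupp.sum_single_index (by simp)

theorem lEval_mul_pow_eq_aeval {K : Type*} [Field K] (z : Kˣ) {f : LaurentPolynomial ℤ} {n : ℕ}
    {g : ℤ[X]} (hfg : toLaurent g = f * LaurentPolynomial.T n) :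
    lEval z f * (z : K) ^ n = aeval (z : K) g := by
  rw [lEval_eq_eval₂, aeval_def, algebraMap_int_eq, ← LaurentPolynomial.eval₂_toLaurent, hfg,
    map_mul, LaurentPolynomial.eval₂_T, zpow_natCast, Units.val_pow_eq_pow_val]

theorem lRF_eq_lEval (f : LaurentPolynomial ℤ) :
    lRF f = lEval (Units.mk0 RatFunc.X RatFunc.X_ne_zero) f :=
  Finsupp.sum_congr fun n _ => by rw [Units.val_zpow_eq_zpow_val, Units.val_mk0]

theorem RatFunc.not_isOfFinOrder_X (K : Type*) [Field K] :
    ¬ IsOfFinOrder (RatFunc.X : RatFunc K) := by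
  rw [isOfFinOrder_iff_pow_eq_one]
  rintro ⟨n, hn, h⟩
  have : (Polynomial.X : K[X]) ^ n = 1 := by
    apply RatFunc.algebraMap_injective
    rw [map_pow, map_one, RatFunc.algebraMap_X, h]
  simpa [hn.ne'] using congrArg natDegree this

theorem Polynomial.exists_eq_C_mul_X_pow_mul_prod_cyclotomic {K : Type*} [Field K]
    [IsAlgClosed K] [CharZero K] (g : ℤ[X])
    (hg : ∀ μ : K, aeval μ g = 0 → μ = 0 ∨ IsOfFinOrder μ) :
    ∃ (c : ℤ) (k N : ℕ) (m : Fin N → ℕ), (∀ j, 0 < m j) ∧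
      g = C c * X ^ k * ∏ j, cyclotomic (m j) ℤ := by
  induction hd : g.natDegree using Nat.strong_induction_on generalizing g with
  | _ d ih =>
  rcases Nat.eq_zero_or_pos d with rfl | hd0
  · refine ⟨g.coeff 0, 0, 0, Fin.elim0, fun j => j.elim0, ?_⟩
    rw [Finset.univ_eq_empty, Finset.prod_empty, pow_zero, mul_one, mul_one]
    exact eq_C_of_natDegree_eq_zero hd
  have hg0 : g ≠ 0 := by rintro rfl; rw [natDegree_zero] at hd; omega
  obtain ⟨μ, hμ⟩ : ∃ μ : K, aeval μ g = 0 := by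
    have hdeg : (g.map (algebraMap ℤ K)).degree ≠ 0 := by
      rw [degree_map_eq_of_injective (algebraMap ℤ K).injective_int]
      exact (natDegree_pos_iff_degree_pos.mp (hd ▸ hd0)).ne'
    simpa [aeval_def, eval₂_eq_eval_map] using IsAlgClosed.exists_root _ hdeg
  have descend : ∀ {p q : ℤ[X]}, p.Monic → 0 < p.natDegree → g = p * q →
      ∃ (c : ℤ) (k N : ℕ) (m : Fin N → ℕ), (∀ j, 0 < m j) ∧
        q = C c * X ^ k * ∏ j, cyclotomic (m j) ℤ := by
    intro p q hp hp0 hgpq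
    have hq0 : q ≠ 0 := by rintro rfl; exact hg0 (by simpa using hgpq)
    have hlt : q.natDegree < d := by rw [← hd, hgpq, hp.natDegree_mul' hq0]; omega
    exact ih _ hlt q (fun ν hν => hg ν (by rw [hgpq, map_mul, hν, mul_zero])) rfl
  rcases hg μ hμ with rfl | hμfin
  · obtain ⟨q, hq⟩ := X_dvd_iff.mpr (by simpa [aeval_def, eval₂_at_zero] using hμ)
    obtain ⟨c, k, N, m, hm, rfl⟩ := descend monic_X (by simp) hq
    exact ⟨c, k + 1, N, m, hm, by rw [hq]; ring⟩
  · have hord := hμfin.orderOf_pos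
    have hprim := IsPrimitiveRoot.orderOf μ
    obtain ⟨q, hq⟩ : cyclotomic (orderOf μ) ℤ ∣ g := by
      rw [cyclotomic_eq_minpoly hprim hord]
      exact minpoly.isIntegrallyClosed_dvd (hprim.isIntegral hord) hμ
    obtain ⟨c, k, N, m, hm, rfl⟩ := descend (cyclotomic.monic _ ℤ)
      (by rw [natDegree_cyclotomic]; exact Nat.totient_pos.mpr hord) hq
    refine ⟨c, k, N + 1, Fin.cons (orderOf μ) m, Fin.cases hord hm, ?_⟩
    rw [hq, Fin.prod_univ_succ, Fin.cons_zero]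
    simp only [Fin.cons_succ]
    ring

theorem Int.isUnit_of_forall_exists_aeval_C_mul_ne_zero {c : ℤ} {h : ℤ[X]}
    (H : ∀ p : ℕ, p.Prime →
      ∃ (K : Type) (_ : Field K) (_ : CharP K p) (x : K), aeval x (C c * h) ≠ 0) :
    IsUnit c := by
  rw [Int.isUnit_iff_natAbs_eq]
  by_contra hc
  obtain ⟨p, hp, hpc⟩ := Nat.exists_prime_and_dvd hc
  obtain ⟨K, _, _, x, hx⟩ := H p hp
  apply hx
  rw [map_mul, aeval_C, eq_intCast,
    (CharP.intCast_eq_zero_iff K p c).mpr (Int.natCast_dvd.mpr hpc), zero_mul]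

theorem Polynomial.exists_eq_unit_mul_X_pow_mul_prod_cyclotomic (g : ℤ[X])
    (hg : ∀ (K : Type) [Field K] (z : Kˣ), ¬ IsOfFinOrder z → aeval (z : K) g ≠ 0) :
    ∃ (c : ℤˣ) (k N : ℕ) (m : Fin N → ℕ), (∀ j, 0 < m j) ∧
      g = C (c : ℤ) * X ^ k * ∏ j, cyclotomic (m j) ℤ := by
  obtain ⟨c, k, N, m, hm, hgc⟩ := exists_eq_C_mul_X_pow_mul_prod_cyclotomic (K := ℂ) g
    fun μ hμ => by
      by_contra! h
      exact hg ℂ (Units.mk0 μ h.1) (by rw [← Units.isOfFinOrder_val]; exact h.2) hμ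
  obtain ⟨c, rfl⟩ : IsUnit c :=
    Int.isUnit_of_forall_exists_aeval_C_mul_ne_zero (h := X ^ k * ∏ j, cyclotomic (m j) ℤ)
      fun p hp => by
        have := Fact.mk hp
        refine ⟨RatFunc (ZMod p), inferInstance, inferInstance, RatFunc.X, ?_⟩
        rw [← mul_assoc, ← hgc]
        refine hg (RatFunc (ZMod p)) (Units.mk0 _ RatFunc.X_ne_zero) ?_
        rw [← Units.isOfFinOrder_val]
        exact RatFunc.not_isOfFinOrder_X _
  exact ⟨c, k, N, m, hm, hgc⟩

theorem Subring.intUnits_mem_units {R : Type*} [Ring R] (S : Subring R) (c : ℤˣ) :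
    Units.map (Int.castRingHom R).toMonoidHom c ∈ S.toSubmonoid.units :=
  ⟨by simp [intCast_mem], by simp [intCast_mem]⟩

theorem X_mem_Atilde : (RatFunc.X : RatFunc ℚ) ∈ Atilde :=
  Subring.subset_closure (Or.inl (Or.inl rfl))

theorem inv_X_mem_Atilde : (RatFunc.X : RatFunc ℚ)⁻¹ ∈ Atilde :=
  Subring.subset_closure (Or.inl (Or.inr rfl))

theorem inv_X_pow_sub_one_mem_Atilde {n : ℕ} (hn : 0 < n) :
    ((RatFunc.X : RatFunc ℚ) ^ n - 1)⁻¹ ∈ Atilde :=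
  Subring.subset_closure (Or.inr ⟨n, hn, rfl⟩)

theorem aeval_X_mem_Atilde (p : ℤ[X]) : aeval (RatFunc.X : RatFunc ℚ) p ∈ Atilde := by
  induction p using Polynomial.induction_on' with
  | add p q hp hq => rw [map_add]; exact Atilde.add_mem hp hq
  | monomial n a =>
    rw [aeval_monomial, eq_intCast]
    exact Atilde.mul_mem (intCast_mem Atilde a) (Atilde.pow_mem X_mem_Atilde n)

theorem RatFunc.X_pow_sub_one_ne_zero {K : Type*} [Field K] {n : ℕ} (hn : 0 < n) :
    (RatFunc.X : RatFunc K) ^ n - 1 ≠ 0 :=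
  sub_ne_zero.mpr fun h => not_isOfFinOrder_X K (isOfFinOrder_iff_pow_eq_one.mpr ⟨n, hn, h⟩)

theorem aeval_X_cyclotomic_mul_prod_erase {m : ℕ} (hm : 0 < m) :
    aeval (RatFunc.X : RatFunc ℚ) (cyclotomic m ℤ) *
        ∏ d ∈ m.divisors.erase m, aeval RatFunc.X (cyclotomic d ℤ) =
      RatFunc.X ^ m - 1 := by
  rw [Finset.mul_prod_erase _ (fun d => aeval RatFunc.X (cyclotomic d ℤ))
    (Nat.mem_divisors_self m hm.ne'), ← map_prod, prod_cyclotomic_eq_X_pow_sub_one hm, map_sub,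
    map_pow, aeval_X, map_one]

theorem aeval_X_cyclotomic_ne_zero {m : ℕ} (hm : 0 < m) :
    aeval (RatFunc.X : RatFunc ℚ) (cyclotomic m ℤ) ≠ 0 :=
  left_ne_zero_of_mul (aeval_X_cyclotomic_mul_prod_erase hm ▸ RatFunc.X_pow_sub_one_ne_zero hm)

theorem inv_aeval_X_cyclotomic_mem_Atilde {m : ℕ} (hm : 0 < m) :
    (aeval (RatFunc.X : RatFunc ℚ) (cyclotomic m ℤ))⁻¹ ∈ Atilde := by
  have hprod := aeval_X_cyclotomic_mul_prod_erase hm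
  have hP := right_ne_zero_of_mul (hprod ▸ RatFunc.X_pow_sub_one_ne_zero hm)
  have : (aeval (RatFunc.X : RatFunc ℚ) (cyclotomic m ℤ))⁻¹ =
      (∏ d ∈ m.divisors.erase m, aeval RatFunc.X (cyclotomic d ℤ)) * (RatFunc.X ^ m - 1)⁻¹ := by
    rw [← hprod, mul_inv_rev, mul_inv_cancel_left₀ hP]
  rw [this]
  exact Atilde.mul_mem (Atilde.prod_mem fun d _ => aeval_X_mem_Atilde _)
    (inv_X_pow_sub_one_mem_Atilde hm)

theorem mk0_X_mem_units_Atilde :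
    Units.mk0 (RatFunc.X : RatFunc ℚ) RatFunc.X_ne_zero ∈ Atilde.toSubmonoid.units :=
  ⟨X_mem_Atilde, by simp [inv_X_mem_Atilde]⟩

theorem mk0_aeval_X_cyclotomic_mem_units_Atilde {m : ℕ} (hm : 0 < m) :
    Units.mk0 _ (aeval_X_cyclotomic_ne_zero hm) ∈ Atilde.toSubmonoid.units :=
  ⟨aeval_X_mem_Atilde _, by simpa using inv_aeval_X_cyclotomic_mem_Atilde hm⟩

theorem mem_Atilde_and_inv_mem_Atilde_of_eq_prod_cyclotomic {x : RatFunc ℚ} (c : ℤˣ) (a : ℤ)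
    {N : ℕ} {m : Fin N → ℕ} (hm : ∀ j, 0 < m j)
    (hx : x = ((c : ℤ) : RatFunc ℚ) * RatFunc.X ^ a *
      ∏ j, aeval (RatFunc.X : RatFunc ℚ) (cyclotomic (m j) ℤ)) :
    x ∈ Atilde ∧ x⁻¹ ∈ Atilde := by
  set u : (RatFunc ℚ)ˣ := Units.map (Int.castRingHom _).toMonoidHom c *
    Units.mk0 RatFunc.X RatFunc.X_ne_zero ^ a *
    ∏ j, Units.mk0 _ (aeval_X_cyclotomic_ne_zero (hm j))
  have hu : u ∈ Atilde.toSubmonoid.units :=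
    mul_mem (mul_mem (Atilde.intUnits_mem_units c) (zpow_mem mk0_X_mem_units_Atilde _))
      (prod_mem fun j _ => mk0_aeval_X_cyclotomic_mem_units_Atilde (hm j))
  have hxu : x = u := by
    rw [hx]
    simp [u]
  rw [hxu, ← Units.val_inv_eq_inv_val]
  exact hu

theorem stmt_1_general (f : LaurentPolynomial ℤ)
    (hspec : ∀ (K : Type) (_ : Field K) (z : Kˣ),
      (∀ n : ℕ, 0 < n → z ^ n ≠ 1) → lEval z f ≠ 0) :
    (∃ (ε : ℤ) (a : ℤ) (N : ℕ) (g : Fin N → Polynomial ℤ) (ι : Fin N → ℤ),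
      (ε = 1 ∨ ε = -1) ∧
      (∀ j, ∃ n : ℕ, 0 < n ∧ g j = Polynomial.cyclotomic n ℤ) ∧
      (∀ j, ι j = 1 ∨ ι j = -1) ∧
      lRF f = (ε : RatFunc ℚ) * (RatFunc.X : RatFunc ℚ) ^ a *
        ∏ j, (Polynomial.aeval (RatFunc.X : RatFunc ℚ) (g j)) ^ (ι j)) ∧
    (lRF f ∈ Atilde ∧ (lRF f)⁻¹ ∈ Atilde) := by
  obtain ⟨n, g, hfg⟩ := f.exists_T_pow
  have hg (K : Type) [Field K] (z : Kˣ) (hz : ¬ IsOfFinOrder z) : aeval (z : K) g ≠ 0 := by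
    rw [← lEval_mul_pow_eq_aeval z hfg]
    refine mul_ne_zero (hspec K _ z fun k hk h => hz ?_) (pow_ne_zero _ z.ne_zero)
    exact isOfFinOrder_iff_pow_eq_one.mpr ⟨k, hk, h⟩
  obtain ⟨c, k, N, m, hm, hgc⟩ := exists_eq_unit_mul_X_pow_mul_prod_cyclotomic g hg
  have hfc : lRF f = ((c : ℤ) : RatFunc ℚ) * RatFunc.X ^ ((k : ℤ) - n) *
      ∏ j, aeval (RatFunc.X : RatFunc ℚ) (cyclotomic (m j) ℤ) := by
    have hfg' := lRF_eq_lEval f ▸ lEval_mul_pow_eq_aeval _ hfg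
    rw [Units.val_mk0] at hfg'
    -- `hfg'` and the goal use two different (equal) `ℤ`-algebra structures on `ℚ(X)`
    rw [eq_div_of_mul_eq (pow_ne_zero n RatFunc.X_ne_zero) hfg', hgc,
      zpow_sub₀ RatFunc.X_ne_zero, zpow_natCast, zpow_natCast]
    simp only [map_mul, map_pow, map_prod, aeval_X, aeval_C, aeval_int_eq_eval₂]
    rw [eq_intCast]
    ring
  refine ⟨⟨c, k - n, N, fun j => cyclotomic (m j) ℤ, fun _ => 1,
    (Int.units_eq_one_or c).imp (congrArg _) (congrArg _), fun j => ⟨m j, hm j, rfl⟩,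
    fun _ => Or.inl rfl, by simpa using hfc⟩,
    mem_Atilde_and_inv_mem_Atilde_of_eq_prod_cyclotomic c _ hm hfc⟩

/-- if a nonzero `f ∈ ℤ[q,q⁻¹]` has nonzero image under every
specialization `q ↦ z` with `z ∈ Kˣ` not a root of unity (`K` any field), then `f` is,
up to sign, of the form `q^a · f_1^{±1} ⋯ f_N^{±1}` with the `f_j` cyclotomic;
equivalently `f` is a unit of `Ã = ℤ[q,q⁻¹,(qⁿ−1)⁻¹ : n>0]`. -/
theorem stmt_1 (f : LaurentPolynomial ℤ) (hf : f ≠ 0)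
    (hspec : ∀ (K : Type) (_ : Field K) (z : Kˣ),
      (∀ n : ℕ, 0 < n → z ^ n ≠ 1) → lEval z f ≠ 0) :
    (∃ (ε : ℤ) (a : ℤ) (N : ℕ) (g : Fin N → Polynomial ℤ) (ι : Fin N → ℤ),
      (ε = 1 ∨ ε = -1) ∧
      (∀ j, ∃ n : ℕ, 0 < n ∧ g j = Polynomial.cyclotomic n ℤ) ∧
      (∀ j, ι j = 1 ∨ ι j = -1) ∧
      lRF f = (ε : RatFunc ℚ) * (RatFunc.X : RatFunc ℚ) ^ a *
        ∏ j, (Polynomial.aeval (RatFunc.X : RatFunc ℚ) (g j)) ^ (ι j)) ∧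
    (lRF f ∈ Atilde ∧ (lRF f)⁻¹ ∈ Atilde) :=
  stmt_1_general f hspec
end
end

section
/- In the quantized enveloping algebra U over ℚ(q), for i ∈ I, x ∈ U^+_γ ∩ T_i(U^+) implies e_i x − q_i^{⟨γ, h_i⟩} x e_i ∈ U^+_{γ+α_i} ∩ T_i(U^+), where q_i = q^{(α_i,α_i)/2}. -/
/-- in the quantized enveloping algebra `U` over `ℚ(q)`, if
`x ∈ U⁺_γ ∩ T_i(U⁺)` then `e_i x − q_i^{⟨γ,h_i⟩} x e_i ∈ U⁺_{γ+α_i} ∩ T_i(U⁺)`.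
The quantum group is abstracted by the data used in the proof: the weight grading of
`U⁺`, the braid automorphism `T_i`, and the skew derivation `r_{i,+}` with its
twisted Leibniz rule and the characterization `U⁺ ∩ T_i(U⁺) = ker r_{i,+}`. -/
theorem stmt_9 {F : Type*} [Field F] {Q : Type*} [AddCommGroup Q] {I : Type*}
    (U : Type*) [Ring U] [Algebra F U]
    (pair : Q → I → ℤ)                         -- ⟨γ, h_i⟩
    (αQ : I → Q)                               -- the simple roots in the root lattice
    (qi : I → Fˣ)                              -- q_i = q^{(α_i,α_i)/2}
    (Uplus : Subalgebra F U)                   -- U⁺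
    (Ug : Q → Submodule F U)                   -- U⁺_γ
    (hUg : ∀ γ, Ug γ ≤ Subalgebra.toSubmodule Uplus)
    (hmul : ∀ γ δ, ∀ x ∈ Ug γ, ∀ y ∈ Ug δ, x * y ∈ Ug (γ + δ))
    (e : I → U) (he : ∀ i, e i ∈ Ug (αQ i))
    (T : I → (U ≃ₐ[F] U))                      -- the braid automorphisms
    (r : I → (U →ₗ[F] U))                      -- the skew derivations r_{i,+}
    (hchar : ∀ i, ∀ u ∈ Uplus,
      (u ∈ (Uplus : Set U) ∩ (T i '' (Uplus : Set U)) ↔ r i u = 0))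
    (hLeib : ∀ i γ', ∀ x ∈ Uplus, ∀ x' ∈ Ug γ',
      r i (x * x') = ((qi i : F) ^ (pair γ' i)) • (r i x * x') + x * r i x')
    (hre : ∀ i, r i (e i) = 1)
    (i : I) (γ : Q) (x : U)
    (hx : x ∈ Ug γ) (hxT : x ∈ T i '' (Uplus : Set U)) :
    e i * x - ((qi i : F) ^ (pair γ i)) • (x * e i) ∈ Ug (γ + αQ i) ∧
    e i * x - ((qi i : F) ^ (pair γ i)) • (x * e i) ∈
      (Uplus : Set U) ∩ (T i '' (Uplus : Set U)) := by
  have hxU : x ∈ Uplus := hUg γ hx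
  have heU : e i ∈ Uplus := hUg (αQ i) (he i)
  have hrx : r i x = 0 := (hchar i x hxU).mp ⟨hxU, hxT⟩
  have hmem : e i * x - ((qi i : F) ^ (pair γ i)) • (x * e i) ∈ Ug (γ + αQ i) := by
    have h1 : e i * x ∈ Ug (αQ i + γ) := hmul _ _ _ (he i) _ hx
    rw [add_comm] at h1
    exact sub_mem h1 (Submodule.smul_mem _ _ (hmul _ _ _ hx _ (he i)))
  refine ⟨hmem, ?_⟩
  have hU : e i * x - ((qi i : F) ^ (pair γ i)) • (x * e i) ∈ Uplus :=
    hUg _ hmem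
  refine (hchar i _ hU).mpr ?_
  have h1 : r i (e i * x) = ((qi i : F) ^ (pair γ i)) • x := by
    rw [hLeib i γ _ heU _ hx, hre, hrx, one_mul, mul_zero, add_zero]
  have h2 : r i (x * e i) = x := by
    rw [hLeib i (αQ i) _ hxU _ (he i), hrx, hre, mul_one, zero_mul, smul_zero, zero_add]
  rw [map_sub, map_smul, h1, h2, sub_self]
end

section
/- Let x ∈ U^+_γ ∩ T_i(U^+) and define x_0 = x and x_{k+1} = (1/[k+1]_{q_i})(e_i x_k − q_i^{⟨γ,h_i⟩+2k} x_k e_i). Then for all n ≥ 0, e_i^{(n)} x = Σ_{k=0}^{n} q_i^{(n−k)(⟨γ,h_i⟩+k)} x_k e_i^{(n−k)}, where e_i^{(m)} = e_i^m/[m]!_{q_i}. -/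
/-!
Multiplying the identity for `n` on the left by `e_i` and using `e_i x_k = [k+1] x_{k+1} + q_i^{c+2k} x_k e_i`
(the recursion read backwards) together with `e_i e_i^{(m)} = e_i^{(m)} e_i = [m+1] e_i^{(m+1)}` produces two sums
which, after shifting the index of one of them, combine termwise by the q-integer identity
`[a+b] = q_i^{-a} [b] + q_i^{b} [a]` into `[n+1]` times the identity for `n+1`. The q-integers `[m]`, `m ≥ 1`, do
not vanish since `q_i = q^d` is transcendental over `ℚ`, so `[n+1]` can be cancelled.
-/

noncomputable section

/-- The quantum integer `[n]_w = (wⁿ − w⁻ⁿ)/(w − w⁻¹)` in `ℚ(q)`. -/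
def qInt (w : RatFunc ℚ) (n : ℕ) : RatFunc ℚ := (w ^ n - w⁻¹ ^ n) / (w - w⁻¹)

/-- The quantum factorial `[n]!_w`. -/
def qFac (w : RatFunc ℚ) : ℕ → RatFunc ℚ
  | 0 => 1
  | n + 1 => qFac w n * qInt w (n + 1)

open Finset

@[simp]
lemma qInt_zero (w : RatFunc ℚ) : qInt w 0 = 0 := by
  simp [qInt]

lemma qInt_add (w : RatFunc ℚ) (a b : ℕ) :
    qInt w (a + b) = w⁻¹ ^ a * qInt w b + w ^ b * qInt w a := by
  simp only [qInt, mul_div_assoc', ← add_div]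
  ring

lemma qInt_ne_zero {w : RatFunc ℚ} (hw : Transcendental ℚ w) {n : ℕ} (hn : 0 < n) :
    qInt w n ≠ 0 := by
  have hw0 : w ≠ 0 := by
    rintro rfl
    exact hw isAlgebraic_zero
  have hnum : ∀ m, 0 < m → w ^ m - w⁻¹ ^ m ≠ 0 := by
    intro m hm h
    have : w ^ (m + m) = 1 := by
      rw [pow_add]
      nth_rw 2 [sub_eq_zero.1 h]
      rw [← mul_pow, mul_inv_cancel₀ hw0, one_pow]
    exact hw.pow (by omega : 0 < m + m) (this ▸ isAlgebraic_one)
  exact div_ne_zero (hnum n hn) (by simpa using hnum 1 one_pos)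

-- The `ℚ`-algebra structure `RatFunc` inherits from `ℚ[X]` is not reducibly the one of a division ring.
lemma transcendental_X_pow {d : ℕ} (hd : 0 < d) :
    Transcendental ℚ ((RatFunc.X : RatFunc ℚ) ^ d) := by
  have h : Transcendental ℚ (RatFunc.X : RatFunc ℚ) := by
    convert RatFunc.transcendental_X (K := ℚ)
    exact Subsingleton.elim _ _
  exact h.pow hd

lemma qInt_mul_zpow_add_qInt_mul_zpow {w : RatFunc ℚ} (hw : w ≠ 0) (c : ℤ) {n j : ℕ}
    (hj : j ≤ n + 1) :
    w ^ (((n : ℤ) + 1 - j) * (c + j - 1)) * qInt w j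
        + w ^ (((n : ℤ) - j) * (c + j) + c + 2 * j) * qInt w (n + 1 - j)
      = qInt w (n + 1) * w ^ (((n : ℤ) + 1 - j) * (c + j)) := by
  obtain ⟨a, ha⟩ : ∃ a, n + 1 = a + j := ⟨n + 1 - j, by omega⟩
  have hn : (n : ℤ) = j + a - 1 := by omega
  rw [ha, Nat.add_sub_cancel, qInt_add, hn, inv_pow, ← zpow_natCast, ← zpow_natCast w j,
    ← zpow_neg, add_mul, mul_right_comm, mul_right_comm (w ^ (j : ℤ)), ← zpow_add₀ hw,
    ← zpow_add₀ hw]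
  ring_nf

lemma sum_range_succ_shift_add {M : Type*} [AddCommMonoid M] (f g : ℕ → M) (n : ℕ)
    (hf : f 0 = 0) (hg : g (n + 1) = 0) :
    ∑ k ∈ range (n + 1), (f (k + 1) + g k) = ∑ j ∈ range (n + 2), (f j + g j) := by
  rw [sum_add_distrib, sum_add_distrib, sum_range_succ' f (n + 1), sum_range_succ g (n + 1), hf,
    hg, add_zero, add_zero]

section DividedPowers

variable {U : Type*} [Ring U] [Algebra (RatFunc ℚ) U] {w : RatFunc ℚ}

def qDivPow (w : RatFunc ℚ) (e : U) (n : ℕ) : U := (qFac w n)⁻¹ • e ^ n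

lemma qDivPow_zero (e : U) : qDivPow w e 0 = 1 := by
  simp [qDivPow, qFac]

lemma qDivPow_mul_self {n : ℕ} (hn : qInt w (n + 1) ≠ 0) (e : U) :
    qDivPow w e n * e = qInt w (n + 1) • qDivPow w e (n + 1) := by
  rw [qDivPow, qDivPow, qFac, mul_inv_rev, smul_smul, mul_inv_cancel_left₀ hn, smul_mul_assoc,
    pow_succ]

lemma self_mul_qDivPow {n : ℕ} (hn : qInt w (n + 1) ≠ 0) (e : U) :
    e * qDivPow w e n = qInt w (n + 1) • qDivPow w e (n + 1) := by
  rw [← qDivPow_mul_self hn, qDivPow, mul_smul_comm, smul_mul_assoc, (Commute.self_pow e n).eq]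

theorem qDivPow_mul_eq_sum (hw : ∀ m, qInt w (m + 1) ≠ 0) (c : ℤ) (e : U) (xs : ℕ → U)
    (hstep : ∀ k : ℕ, e * xs k = qInt w (k + 1) • xs (k + 1) + w ^ (c + 2 * (k : ℤ)) • (xs k * e))
    (n : ℕ) :
    qDivPow w e n * xs 0 =
      ∑ k ∈ range (n + 1), w ^ (((n : ℤ) - k) * (c + k)) • (xs k * qDivPow w e (n - k)) := by
  have hw0 : w ≠ 0 := by
    rintro rfl
    exact hw 0 (by simp [qInt])
  induction n with
  | zero => simp [qDivPow_zero]
  | succ n ih =>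
    set t : ℕ → U := fun j ↦ xs j * qDivPow w e (n + 1 - j)
    set a : ℕ → RatFunc ℚ := fun j ↦ w ^ (((n : ℤ) + 1 - j) * (c + j - 1)) * qInt w j
    set b : ℕ → RatFunc ℚ := fun j ↦ w ^ (((n : ℤ) - j) * (c + j) + c + 2 * j) * qInt w (n + 1 - j)
    have hterm : ∀ k ∈ range (n + 1),
        e * (w ^ (((n : ℤ) - k) * (c + k)) • (xs k * qDivPow w e (n - k)))
          = a (k + 1) • t (k + 1) + b k • t k := by
      intro k hk
      have hnk : n + 1 - k = n - k + 1 := by grind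
      rw [mul_smul_comm, ← mul_assoc, hstep, add_mul, smul_mul_assoc, smul_mul_assoc, mul_assoc,
        self_mul_qDivPow (hw _), mul_smul_comm, smul_add, smul_smul, smul_smul, smul_smul]
      simp only [a, b, t, hnk, Nat.add_sub_add_right, Nat.cast_add, Nat.cast_one, ← zpow_add₀ hw0]
      ring_nf
    apply smul_right_injective U (hw n)
    dsimp only
    rw [← smul_mul_assoc, ← self_mul_qDivPow (hw n), mul_assoc, ih, mul_sum, sum_congr rfl hterm,
      sum_range_succ_shift_add (fun j ↦ a j • t j) (fun j ↦ b j • t j) n (by simp [a])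
        (by simp [b]), smul_sum]
    refine sum_congr rfl fun j hj ↦ ?_
    rw [← add_smul, smul_smul, Nat.cast_succ]
    exact congrArg (· • t j)
      (qInt_mul_zpow_add_qInt_mul_zpow hw0 c (Nat.lt_succ_iff.1 (mem_range.1 hj)))

end DividedPowers

theorem stmt_10_general {U : Type*} [Ring U] [Algebra (RatFunc ℚ) U]
    (d : ℕ) (hd : 0 < d)            -- d = (α_i,α_i)/2
    (qi : RatFunc ℚ) (hqi : qi = (RatFunc.X : RatFunc ℚ) ^ d)
    (c : ℤ)                          -- c = ⟨γ,h_i⟩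
    (e x : U)
    (xs : ℕ → U) (hx0 : xs 0 = x)
    (hrec : ∀ k : ℕ,
      xs (k + 1) = (qInt qi (k + 1))⁻¹ •
        (e * xs k - (qi ^ (c + 2 * (k : ℤ))) • (xs k * e))) :
    ∀ n : ℕ,
      (qFac qi n)⁻¹ • (e ^ n) * x =
        ∑ k ∈ Finset.range (n + 1),
          (qi ^ (((n : ℤ) - k) * (c + k))) •
            (xs k * ((qFac qi (n - k))⁻¹ • (e ^ (n - k)))) := by
  have hqInt : ∀ m, qInt qi (m + 1) ≠ 0 := fun m ↦
    qInt_ne_zero (hqi ▸ transcendental_X_pow hd) m.succ_pos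
  have hstep : ∀ k : ℕ,
      e * xs k = qInt qi (k + 1) • xs (k + 1) + qi ^ (c + 2 * (k : ℤ)) • (xs k * e) := fun k ↦ by rw [hrec k, smul_inv_smul₀ (hqInt k), sub_add_cancel]
  subst hx0
  exact qDivPow_mul_eq_sum hqInt c e xs hstep

/-- for `x ∈ U⁺_γ ∩ T_i(U⁺)`, with `x_0 = x` and
`x_{k+1} = [k+1]_{q_i}⁻¹ (e_i x_k − q_i^{⟨γ,h_i⟩+2k} x_k e_i)`, one has
`e_i^{(n)} x = Σ_{k=0}^n q_i^{(n−k)(⟨γ,h_i⟩+k)} x_k e_i^{(n−k)}`,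
where `e_i^{(m)} = e_i^m/[m]!_{q_i}` and `q_i = q^{(α_i,α_i)/2}`. -/
theorem stmt_10 {U : Type*} [Ring U] [Algebra (RatFunc ℚ) U]
    (d : ℕ) (hd : 0 < d)            -- d = (α_i,α_i)/2
    (qi : RatFunc ℚ) (hqi : qi = (RatFunc.X : RatFunc ℚ) ^ d)
    (c : ℤ)                          -- c = ⟨γ,h_i⟩
    (Uplus TiUplus : Set U)          -- U⁺ and T_i(U⁺)
    (e x : U) (hx : x ∈ Uplus ∩ TiUplus)
    (xs : ℕ → U) (hx0 : xs 0 = x)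
    (hrec : ∀ k : ℕ,
      xs (k + 1) = (qInt qi (k + 1))⁻¹ •
        (e * xs k - (qi ^ (c + 2 * (k : ℤ))) • (xs k * e))) :
    ∀ n : ℕ,
      (qFac qi n)⁻¹ • (e ^ n) * x =
        ∑ k ∈ Finset.range (n + 1),
          (qi ^ (((n : ℤ) - k) * (c + k))) •
            (xs k * ((qFac qi (n - k))⁻¹ • (e ^ (n - k)))) :=
  stmt_10_general d hd qi hqi c e x xs hx0 hrec
end
end

section
/- Let C = μ + Q be a coset of the root lattice Q in the weight lattice P. Then there exists a function f_C : C → ℤ such that f_C(λ) − f_C(λ − α_i) = 2⟨λ, t_i⟩ for all λ ∈ C and i ∈ I, and f_C is unique up to addition of a constant. Moreover, if (·,·) is extended to a W-invariant symmetric bilinear form on 𝔥*, then f_C(λ) = (λ+ρ, λ+ρ) + a for some constant a ∈ ℚ. -/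
open Finset in
lemma aux_mem_span {V : Type*} [AddCommGroup V] [Module ℚ V] {I : Type*} [Fintype I]
    (v : I → V) (x : V) :
    x ∈ Submodule.span ℤ (Set.range v) ↔ ∃ n : I → ℤ, x = ∑ i, (n i : ℚ) • v i := by
  rw [Finsupp.mem_span_range_iff_exists_finsupp]
  constructor
  · rintro ⟨c, rfl⟩
    exact ⟨c, by rw [Finsupp.sum_fintype _ _ (by simp)]; simp [Int.cast_smul_eq_zsmul]⟩
  · rintro ⟨n, rfl⟩
    refine ⟨Finsupp.equivFunOnFinite.symm n, ?_⟩
    rw [Finsupp.sum_fintype _ _ (by simp)]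
    simp [Int.cast_smul_eq_zsmul]

lemma aux_coords_unique {V : Type*} [AddCommGroup V] [Module ℚ V] {I : Type*} [Fintype I]
    {v : I → V} (hv : LinearIndependent ℚ v) (n n' : I → ℤ)
    (heq : ∑ i, (n i : ℚ) • v i = ∑ i, (n' i : ℚ) • v i) : n = n' := by
  have h0 : ∑ i, ((n i : ℚ) - (n' i : ℚ)) • v i = 0 := by
    simp [sub_smul, Finset.sum_sub_distrib, heq]
  have := Fintype.linearIndependent_iff.mp hv _ h0
  funext i
  have := this i
  have : (n i : ℚ) = (n' i : ℚ) := by linarith [sub_eq_zero.mp this]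
  exact_mod_cast this

lemma aux_sum_update {V : Type*} [AddCommGroup V] [Module ℚ V] {I : Type*} [Fintype I] [DecidableEq I]
    (v : I → V) (n : I → ℤ) (i : I) (k : ℤ) :
    ∑ j, ((Function.update n i k j : ℤ) : ℚ) • v j
      = (∑ j, (n j : ℚ) • v j) + ((k - n i : ℤ) : ℚ) • v i := by
  have key : ∀ j, ((Function.update n i k j : ℤ) : ℚ) • v j
      = (n j : ℚ) • v j + (if j = i then ((k - n i : ℤ) : ℚ) • v i else 0) := by
    intro j
    rcases eq_or_ne j i with rfl | hj
    · push_cast [Function.update_self, sub_smul]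
      simp
    · simp [Function.update_of_ne hj, hj]
  simp only [key, Finset.sum_add_distrib, Finset.sum_ite_eq', Finset.mem_univ, if_true]

lemma aux_const {V : Type*} [AddCommGroup V] [Module ℚ V] {I : Type*} [Fintype I]
    [DecidableEq I]
    (α : I → V) (μ : V) (R : V → I → ℚ) (φ ψ : V → ℚ)
    (hφ : ∀ l, l - μ ∈ Submodule.span ℤ (Set.range α) → ∀ i, φ l - φ (l - α i) = R l i)
    (hψ : ∀ l, l - μ ∈ Submodule.span ℤ (Set.range α) → ∀ i, ψ l - ψ (l - α i) = R l i) :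
    ∀ l, l - μ ∈ Submodule.span ℤ (Set.range α) → φ l - ψ l = φ μ - ψ μ := by
  have hmemsum : ∀ n : I → ℤ,
      (μ + ∑ i, (n i : ℚ) • α i) - μ ∈ Submodule.span ℤ (Set.range α) := by
    intro n
    rw [add_sub_cancel_left]
    refine Submodule.sum_mem _ fun i _ => ?_
    rw [Int.cast_smul_eq_zsmul]
    exact Submodule.smul_mem _ (n i) (Submodule.subset_span ⟨i, rfl⟩)
  have step : ∀ l, l - μ ∈ Submodule.span ℤ (Set.range α) →
      ∀ i, φ l - ψ l = φ (l - α i) - ψ (l - α i) := by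
    intro l hl i
    have h1 := hφ l hl i
    have h2 := hψ l hl i
    linarith
  have main : ∀ N : ℕ, ∀ n : I → ℤ, (∑ i, (n i).natAbs) ≤ N →
      φ (μ + ∑ i, (n i : ℚ) • α i) - ψ (μ + ∑ i, (n i : ℚ) • α i) = φ μ - ψ μ := by
    intro N
    induction N with
    | zero =>
      intro n hn
      have hz : ∀ i, n i = 0 := by
        intro i
        have h1 : (n i).natAbs ≤ ∑ j, (n j).natAbs :=
          Finset.single_le_sum (f := fun j => (n j).natAbs)
            (fun j _ => Nat.zero_le _) (Finset.mem_univ i)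
        omega
      simp [hz]
    | succ N IH =>
      intro n hn
      by_cases h0 : ∀ i, n i = 0
      · simp [h0]
      · push_neg at h0
        obtain ⟨i, hi⟩ := h0
        set k : ℤ := if 0 < n i then n i - 1 else n i + 1 with hk
        set n' := Function.update n i k with hn'
        have e1 : ∑ j, (n' j).natAbs = k.natAbs + ∑ j ∈ Finset.univ.erase i, (n j).natAbs := by
          rw [← Finset.add_sum_erase _ (fun j => (n' j).natAbs) (Finset.mem_univ i)]
          congr 1
          · simp [hn']
          · exact Finset.sum_congr rfl fun j hj => by
              simp [hn', Function.update_of_ne (Finset.ne_of_mem_erase hj)]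
        have e2 : ∑ j, (n j).natAbs
            = (n i).natAbs + ∑ j ∈ Finset.univ.erase i, (n j).natAbs :=
          (Finset.add_sum_erase _ _ (Finset.mem_univ i)).symm
        have hk' : k.natAbs + 1 = (n i).natAbs := by rw [hk]; split <;> omega
        have hnorm : ∑ j, (n' j).natAbs ≤ N := by omega
        have hsum := aux_sum_update α n i k
        rcases lt_or_ge 0 (n i) with hpos | hneg
        · have hkk : ((k - n i : ℤ) : ℚ) = -1 := by rw [hk, if_pos hpos]; push_cast; ring
          have hs : ∑ j, (n' j : ℚ) • α j = (∑ j, (n j : ℚ) • α j) - α i := by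
            rw [hn', hsum, hkk, neg_one_smul]
            abel
          have hl' : μ + ∑ j, (n' j : ℚ) • α j = (μ + ∑ j, (n j : ℚ) • α j) - α i := by
            rw [hs]; abel
          calc φ (μ + ∑ j, (n j : ℚ) • α j) - ψ (μ + ∑ j, (n j : ℚ) • α j)
              = φ ((μ + ∑ j, (n j : ℚ) • α j) - α i)
                - ψ ((μ + ∑ j, (n j : ℚ) • α j) - α i) := step _ (hmemsum n) i
            _ = φ (μ + ∑ j, (n' j : ℚ) • α j) - ψ (μ + ∑ j, (n' j : ℚ) • α j) := by rw [hl']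
            _ = φ μ - ψ μ := IH n' hnorm
        · have hni : n i < 0 := by omega
          have hkk : ((k - n i : ℤ) : ℚ) = 1 := by
            rw [hk, if_neg (by omega)]; push_cast; ring
          have hs : ∑ j, (n' j : ℚ) • α j = (∑ j, (n j : ℚ) • α j) + α i := by
            rw [hn', hsum, hkk, one_smul]
          have hl' : (μ + ∑ j, (n' j : ℚ) • α j) - α i = μ + ∑ j, (n j : ℚ) • α j := by
            rw [hs]; abel
          calc φ (μ + ∑ j, (n j : ℚ) • α j) - ψ (μ + ∑ j, (n j : ℚ) • α j)
              = φ ((μ + ∑ j, (n' j : ℚ) • α j) - α i)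
                - ψ ((μ + ∑ j, (n' j : ℚ) • α j) - α i) := by rw [hl']
            _ = φ (μ + ∑ j, (n' j : ℚ) • α j) - ψ (μ + ∑ j, (n' j : ℚ) • α j) :=
                (step _ (hmemsum n') i).symm
            _ = φ μ - ψ μ := IH n' hnorm
  intro l hl
  obtain ⟨n, hn⟩ := (aux_mem_span α (l - μ)).mp hl
  have hl2 : l = μ + ∑ i, (n i : ℚ) • α i := by rw [← hn]; abel
  rw [hl2]
  exact main _ n le_rfl

lemma aux_Fdiff {I : Type*} [Fintype I] [DecidableEq I]
    (m dd : I → ℤ) (S : I → I → ℤ) (hSsym : ∀ p q, S p q = S q p)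
    (hSdiag : ∀ i, S i i = 2 * dd i) (n : I → ℤ) (i : I) :
    ((∑ j, 2 * m j * n j) + (∑ p, ∑ q, n p * n q * S p q) + (∑ j, 2 * dd j * n j))
    - ((∑ j, 2 * m j * Function.update n i (n i - 1) j)
       + (∑ p, ∑ q, Function.update n i (n i - 1) p * Function.update n i (n i - 1) q * S p q)
       + (∑ j, 2 * dd j * Function.update n i (n i - 1) j))
    = 2 * m i + 2 * ∑ j, n j * S i j := by
  have hpt : ∀ j, Function.update n i (n i - 1) j = n j - (if j = i then 1 else 0) := by
    intro j
    rcases eq_or_ne j i with rfl | hj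
    · simp
    · simp [Function.update_of_ne hj, hj]
  have h1 : ∑ j, 2 * m j * Function.update n i (n i - 1) j
      = (∑ j, 2 * m j * n j) - 2 * m i := by
    simp only [hpt, mul_sub, Finset.sum_sub_distrib, mul_ite, mul_one, mul_zero,
      Finset.sum_ite_eq', Finset.mem_univ, if_true]
  have h3 : ∑ j, 2 * dd j * Function.update n i (n i - 1) j
      = (∑ j, 2 * dd j * n j) - 2 * dd i := by
    simp only [hpt, mul_sub, Finset.sum_sub_distrib, mul_ite, mul_one, mul_zero,
      Finset.sum_ite_eq', Finset.mem_univ, if_true]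
  have h2 : ∑ p, ∑ q, Function.update n i (n i - 1) p * Function.update n i (n i - 1) q * S p q
      = (∑ p, ∑ q, n p * n q * S p q) - (∑ q, n q * S i q) - (∑ p, n p * S p i) + S i i := by
    simp only [hpt, sub_mul, mul_sub, ite_mul, mul_ite, mul_one, mul_zero, one_mul, zero_mul,
      Finset.sum_sub_distrib, Finset.sum_ite_irrel, Finset.sum_const_zero,
      Finset.sum_ite_eq', Finset.mem_univ, if_true]
    ring
  have h4 : ∑ p, n p * S p i = ∑ j, n j * S i j := by
    exact Finset.sum_congr rfl fun p _ => by rw [hSsym]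
  rw [h1, h2, h3, h4, hSdiag]
  ring

/-- on a coset `C = μ + Q` of the root lattice, there is a function
`f_C : C → ℤ` with `f_C(λ) − f_C(λ−α_i) = 2⟨λ,t_i⟩`, unique up to an additive
constant; moreover for any `W`-invariant symmetric bilinear extension of `(·,·)` to
`𝔥*` one has `f_C(λ) = (λ+ρ,λ+ρ) + a` for some constant `a`. -/
theorem stmt_19 {𝔥 : Type*} [AddCommGroup 𝔥] [Module ℚ 𝔥] [FiniteDimensional ℚ 𝔥]
    {I : Type*} [Fintype I]
    (h : I → 𝔥) (α : I → Module.Dual ℚ 𝔥)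
    (hh : LinearIndependent ℚ h) (hα : LinearIndependent ℚ α)
    (a : I → I → ℤ) (haij : ∀ i j, α j (h i) = (a i j : ℚ))
    (hdiag : ∀ i, a i i = 2) (hoff : ∀ i j, i ≠ j → a i j ≤ 0)
    (d : I → ℤ) (hd : ∀ i, 0 < d i) (hsymm : ∀ i j, d i * a i j = d j * a j i)
    -- the ℤ-form, with t_i := d_i • h_i ∈ 𝔥_ℤ
    (hℤ : Submodule ℤ 𝔥) (ht : ∀ i, (d i) • (h i) ∈ hℤ)
    -- μ ∈ P determines the coset C = μ + Q
    (μ : Module.Dual ℚ 𝔥) (hμ : ∀ x ∈ hℤ, ∃ n : ℤ, μ x = (n : ℚ)) :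
    -- existence of f_C
    (∃ f : Module.Dual ℚ 𝔥 → ℤ,
      ∀ l : Module.Dual ℚ 𝔥, l - μ ∈ Submodule.span ℤ (Set.range α) →
        ∀ i, (f l : ℚ) - (f (l - α i) : ℚ) = 2 * l ((d i) • (h i))) ∧
    -- uniqueness up to addition of a constant
    (∀ f g : Module.Dual ℚ 𝔥 → ℤ,
      (∀ l, l - μ ∈ Submodule.span ℤ (Set.range α) →
        ∀ i, (f l : ℚ) - (f (l - α i) : ℚ) = 2 * l ((d i) • (h i))) →
      (∀ l, l - μ ∈ Submodule.span ℤ (Set.range α) →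
        ∀ i, (g l : ℚ) - (g (l - α i) : ℚ) = 2 * l ((d i) • (h i))) →
      ∃ c : ℤ, ∀ l, l - μ ∈ Submodule.span ℤ (Set.range α) → f l = g l + c) ∧
    -- the formula via a W-invariant extension of the bilinear form
    (∀ B : Module.Dual ℚ 𝔥 →ₗ[ℚ] Module.Dual ℚ 𝔥 →ₗ[ℚ] ℚ,
      (∀ x y, B x y = B y x) →
      (∀ i, B (α i) (α i) = 2 * (d i : ℚ)) →
      (∀ i x y, B (x - x (h i) • α i) (y - y (h i) • α i) = B x y) →
      ∀ ρ : Module.Dual ℚ 𝔥, (∀ i, ρ (h i) = 1) →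
      ∀ f : Module.Dual ℚ 𝔥 → ℤ,
        (∀ l, l - μ ∈ Submodule.span ℤ (Set.range α) →
          ∀ i, (f l : ℚ) - (f (l - α i) : ℚ) = 2 * l ((d i) • (h i))) →
        ∃ c : ℚ, ∀ l, l - μ ∈ Submodule.span ℤ (Set.range α) →
          (f l : ℚ) = B (l + ρ) (l + ρ) + c) := by
  classical
  have hμmem : μ - μ ∈ Submodule.span ℤ (Set.range α) := by
    rw [sub_self]; exact Submodule.zero_mem _
  refine ⟨?_, ?_, ?_⟩
  · -- existence
    choose m hm using fun i => hμ _ (ht i)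
    set S : I → I → ℤ := fun p q => d p * a p q with hS
    have hSsym : ∀ p q, S p q = S q p := fun p q => hsymm p q
    have hSdiag : ∀ p, S p p = 2 * d p := fun p => by simp only [hS, hdiag p]; ring
    set F : (I → ℤ) → ℤ := fun n =>
      (∑ j, 2 * m j * n j) + (∑ p, ∑ q, n p * n q * S p q) + (∑ j, 2 * d j * n j) with hF
    set rep : Module.Dual ℚ 𝔥 → (I → ℤ) := fun l =>
      if hl : ∃ n : I → ℤ, l - μ = ∑ i, (n i : ℚ) • α i then hl.choose else 0 with hrepdef
    have hrep : ∀ l, l - μ ∈ Submodule.span ℤ (Set.range α) →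
        l - μ = ∑ i, (rep l i : ℚ) • α i := by
      intro l hl
      have he := (aux_mem_span α (l - μ)).mp hl
      have : rep l = he.choose := by rw [hrepdef]; exact dif_pos he
      rw [this]
      exact he.choose_spec
    have hrep_eq : ∀ l n, l - μ = ∑ i, (n i : ℚ) • α i → rep l = n := by
      intro l n hn
      have hl : l - μ ∈ Submodule.span ℤ (Set.range α) := (aux_mem_span α _).mpr ⟨n, hn⟩
      exact aux_coords_unique hα _ _ (by rw [← hrep l hl, hn])
    refine ⟨fun l => F (rep l), ?_⟩
    intro l hl i
    have hn : l - μ = ∑ j, (rep l j : ℚ) • α j := hrep l hl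
    have hrepl' : rep (l - α i) = Function.update (rep l) i (rep l i - 1) := by
      apply hrep_eq
      rw [aux_sum_update α (rep l) i (rep l i - 1)]
      have : ((rep l i - 1 - rep l i : ℤ) : ℚ) = -1 := by push_cast; ring
      rw [this, neg_one_smul]
      rw [show l - α i - μ = (l - μ) - α i from by abel, hn]
      abel
    show (F (rep l) : ℚ) - (F (rep (l - α i)) : ℚ) = 2 * l ((d i) • (h i))
    rw [hrepl']
    have hFd := aux_Fdiff m d S hSsym hSdiag (rep l) i
    have hlval : l ((d i) • (h i))
        = (m i : ℚ) + ∑ j, (rep l j : ℚ) * ((d i : ℚ) * (a i j : ℚ)) := by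
      have e : l ((d i) • (h i)) = (l - μ) ((d i) • (h i)) + μ ((d i) • (h i)) := by
        rw [LinearMap.sub_apply]; ring
      rw [e, hn, hm, LinearMap.sum_apply, add_comm]
      congr 1
      refine Finset.sum_congr rfl fun j _ => ?_
      rw [LinearMap.smul_apply, smul_eq_mul, map_zsmul, zsmul_eq_mul, haij]
    have hcast : ((F (rep l) : ℤ) : ℚ) - ((F (Function.update (rep l) i (rep l i - 1)) : ℤ) : ℚ)
        = ((F (rep l) - F (Function.update (rep l) i (rep l i - 1)) : ℤ) : ℚ) := by push_cast; ring
    rw [hcast, hF] at *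
    rw [hFd]
    rw [hlval]
    push_cast [hS]
    rw [mul_add, Finset.mul_sum]
  · -- uniqueness
    intro f g hf hg
    refine ⟨f μ - g μ, ?_⟩
    intro l hl
    have := aux_const α μ (fun l i => 2 * l ((d i) • (h i)))
      (fun l => (f l : ℚ)) (fun l => (g l : ℚ)) hf hg l hl
    have h2 : (f l : ℚ) = (g l : ℚ) + ((f μ : ℚ) - (g μ : ℚ)) := by linarith
    exact_mod_cast h2
  · -- formula
    intro B hBsym hBαα hBW ρ hρ f hf
    have hBα : ∀ i (x : Module.Dual ℚ 𝔥), B x (α i) = (d i : ℚ) * x (h i) := by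
      intro i x
      have hW := hBW i x (α i)
      have hαi : (α i) (h i) = (2 : ℚ) := by rw [haij, hdiag]; norm_num
      rw [hαi] at hW
      have h2 : (α i : Module.Dual ℚ 𝔥) - (2 : ℚ) • α i = -(α i) := by
        rw [two_smul]; abel
      rw [h2] at hW
      have hexp : B (x - x (h i) • α i) (-(α i))
          = -(B x (α i)) + x (h i) * B (α i) (α i) := by
        rw [map_neg, map_sub, map_smul]
        simp only [LinearMap.sub_apply, LinearMap.smul_apply, smul_eq_mul]
        ring
      rw [hexp, hBαα] at hW
      linarith
    have hψ : ∀ l, l - μ ∈ Submodule.span ℤ (Set.range α) →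
        ∀ i, B (l + ρ) (l + ρ) - B (l - α i + ρ) (l - α i + ρ) = 2 * l ((d i) • (h i)) := by
      intro l _ i
      have hexp : B (l - α i + ρ) (l - α i + ρ)
          = B (l + ρ) (l + ρ) - 2 * B (l + ρ) (α i) + B (α i) (α i) := by
        have h1 : l - α i + ρ = (l + ρ) - α i := by abel
        rw [h1]
        simp only [map_sub, LinearMap.sub_apply]
        rw [hBsym (α i) (l + ρ)]
        ring
      rw [hexp, hBα, hBαα]
      have hval : l ((d i) • (h i)) = (d i : ℚ) * l (h i) := by
        rw [map_zsmul, zsmul_eq_mul]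
      rw [hval]
      simp only [LinearMap.add_apply, hρ]
      ring
    refine ⟨(f μ : ℚ) - B (μ + ρ) (μ + ρ), ?_⟩
    intro l hl
    have := aux_const α μ (fun l i => 2 * l ((d i) • (h i)))
      (fun l => (f l : ℚ)) (fun l => B (l + ρ) (l + ρ)) hf hψ l hl
    linarith
end
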